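/- arXiv:2107.11860 — 2 statements merged into one kernel-verified Lean document; each statement's English description precedes it below -/
import Mathlib

section
/- Let a12, a13, a21, a23, a31, a32, η be real constants, and let x1(0), x2(0), x3(0) be real initial values satisfying z = x1(0) + a12·x2(0) + a13·x3(0) = a21·x1(0) + x2(0) + a23·x3(0) = a31·x1(0) + a32·x2(0) + x3(0). Suppose η ≠ 0 and for all t in an interval I containing 0 the denominator D(t) = exp(−η t) + z·(1 − exp(−η t))/η is nonzero. Then the functions xₙ(t) = xₙ(0)/D(t), n = 1,2,3, satisfy on I the asymmetric May-Leonard system: x1' = x1(η − x1 − a12·x2 − a13·x3), x2' = x2(η − a21·x1 − x2 − a23·x3), x3' = x3(η − a31·x1 − a32·x2 − x3). -/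
theorem stmt0 (a12 a13 a21 a23 a31 a32 η x10 x20 x30 z : ℝ)
    (hη : η ≠ 0)
    (hz1 : z = x10 + a12 * x20 + a13 * x30)
    (hz2 : z = a21 * x10 + x20 + a23 * x30)
    (hz3 : z = a31 * x10 + a32 * x20 + x30)
    (I : Set ℝ) (hI0 : (0 : ℝ) ∈ I)
    (D : ℝ → ℝ)
    (hD : ∀ t, D t = Real.exp (-η * t) + z * (1 - Real.exp (-η * t)) / η)
    (hDne : ∀ t ∈ I, D t ≠ 0)
    (x1 x2 x3 : ℝ → ℝ)
    (hx1 : ∀ t, x1 t = x10 / D t)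
    (hx2 : ∀ t, x2 t = x20 / D t)
    (hx3 : ∀ t, x3 t = x30 / D t) :
    ∀ t ∈ I,
      HasDerivAt x1 (x1 t * (η - x1 t - a12 * x2 t - a13 * x3 t)) t ∧
      HasDerivAt x2 (x2 t * (η - a21 * x1 t - x2 t - a23 * x3 t)) t ∧
      HasDerivAt x3 (x3 t * (η - a31 * x1 t - a32 * x2 t - x3 t)) t := by
  intro t ht
  have hne := hDne t ht
  -- derivative of D
  have hD' : HasDerivAt D ((z - η) * Real.exp (-η * t)) t := by
    have h1 : HasDerivAt (fun s : ℝ => -η * s) (-η) t := by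
      simpa using (hasDerivAt_id t).const_mul (-η)
    have h2 : HasDerivAt (fun s : ℝ => Real.exp (-η * s)) (Real.exp (-η * t) * (-η)) t :=
      h1.exp
    have h3 : HasDerivAt (fun s : ℝ => Real.exp (-η * s) +
        z * (1 - Real.exp (-η * s)) / η)
        (Real.exp (-η * t) * (-η) + z * (0 - Real.exp (-η * t) * (-η)) / η) t :=
      h2.add (((hasDerivAt_const t (1:ℝ)).sub h2).const_mul z |>.div_const η)
    rw [funext hD]
    convert h3 using 1
    field_simp
    ring
  -- key algebraic identity
  have hkey : z - η * D t = (z - η) * Real.exp (-η * t) := by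
    rw [hD t]
    field_simp
    ring
  have main : ∀ c : ℝ, HasDerivAt (fun s => c / D s)
      ((c / D t) * (η - z / D t)) t := by
    intro c
    have h := (hasDerivAt_const t c).div hD' hne
    refine h.congr_deriv ?_
    rw [← hkey]
    field_simp
    ring
  refine ⟨?_, ?_, ?_⟩
  · have e1 : x1 t * (η - x1 t - a12 * x2 t - a13 * x3 t)
        = x10 / D t * (η - z / D t) := by
      rw [hx1, hx2, hx3, hz1]
      field_simp
      ring
    rw [e1, funext hx1]; exact main x10
  · have e2 : x2 t * (η - a21 * x1 t - x2 t - a23 * x3 t)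
        = x20 / D t * (η - z / D t) := by
      rw [hx1, hx2, hx3, hz2]
      field_simp
      ring
    rw [e2, funext hx2]; exact main x20
  · have e3 : x3 t * (η - a31 * x1 t - a32 * x2 t - x3 t)
        = x30 / D t * (η - z / D t) := by
      rw [hx1, hx2, hx3, hz3]
      field_simp
      ring
    rw [e3, funext hx3]; exact main x30
end

section
/- Let a12, a13, a21, a23, a31, a32 be real constants and y1(0), y2(0), y3(0) real initial values satisfying z = y1(0) + a12·y2(0) + a13·y3(0) = a21·y1(0) + y2(0) + a23·y3(0) = a31·y1(0) + a32·y2(0) + y3(0). Then on any interval where 1 + z·τ ≠ 0, the functions yₙ(τ) = yₙ(0)/(1 + z·τ), n = 1,2,3, satisfy the system y1' = −y1(y1 + a12·y2 + a13·y3), y2' = −y2(a21·y1 + y2 + a23·y3), y3' = −y3(a31·y1 + a32·y2 + y3). -/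
lemma auxderiv (c z τ : ℝ) (h : 1 + z * τ ≠ 0) :
    HasDerivAt (fun t => c / (1 + z * t)) (-(c * z) / (1 + z * τ)^2) τ := by
  have hd : HasDerivAt (fun t : ℝ => 1 + z * t) z τ := by
    simpa using (hasDerivAt_id τ).const_mul z |>.const_add 1
  have := (hasDerivAt_const τ c).div hd h
  exact this.congr_deriv (by ring)

theorem stmt1 (a12 a13 a21 a23 a31 a32 y10 y20 y30 z : ℝ)
    (hz1 : z = y10 + a12 * y20 + a13 * y30)
    (hz2 : z = a21 * y10 + y20 + a23 * y30)
    (hz3 : z = a31 * y10 + a32 * y20 + y30)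
    (y1 y2 y3 : ℝ → ℝ)
    (hy1 : ∀ τ, y1 τ = y10 / (1 + z * τ))
    (hy2 : ∀ τ, y2 τ = y20 / (1 + z * τ))
    (hy3 : ∀ τ, y3 τ = y30 / (1 + z * τ)) :
    ∀ τ : ℝ, 1 + z * τ ≠ 0 →
      HasDerivAt y1 (-(y1 τ) * (y1 τ + a12 * y2 τ + a13 * y3 τ)) τ ∧
      HasDerivAt y2 (-(y2 τ) * (a21 * y1 τ + y2 τ + a23 * y3 τ)) τ ∧
      HasDerivAt y3 (-(y3 τ) * (a31 * y1 τ + a32 * y2 τ + y3 τ)) τ := by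
  have e1 : y1 = fun t => y10 / (1 + z * t) := funext hy1
  have e2 : y2 = fun t => y20 / (1 + z * t) := funext hy2
  have e3 : y3 = fun t => y30 / (1 + z * t) := funext hy3
  subst e1 e2 e3
  intro τ h
  refine ⟨?_, ?_, ?_⟩
  · have := auxderiv y10 z τ h
    convert this using 1
    field_simp
    rw [hz1]
  · have := auxderiv y20 z τ h
    convert this using 1
    field_simp
    rw [hz2]
  · have := auxderiv y30 z τ h
    convert this using 1
    field_simp
    rw [hz3]
end
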